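/- Let a ∈ [0, 1/2], let C be a copula, and let B_{a,C} be the ordinal sum of the single copula {C} with respect to the single interval {(a, 1−a)}. If ν is a copula measure of B_{a,C} and μ is a copula measure of C, then Kendall's tau satisfies τ(B_{a,C}) = (1−2a)²·τ(C) + 4a − 4a², i.e., 4·∫_{[0,1]²} B_{a,C} dν − 1 = (1−2a)²·(4·∫_{[0,1]²} C dμ − 1) + 4a − 4a². -/

import Mathlib

open MeasureTheory Set

/-- A bivariate copula, viewed as a real function of two variables whose defining
properties are required on the unit square. -/
def IsCopula (C : ℝ → ℝ → ℝ) : Prop :=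
  (∀ v ∈ Icc (0:ℝ) 1, C 0 v = 0) ∧
  (∀ u ∈ Icc (0:ℝ) 1, C u 0 = 0) ∧
  (∀ u ∈ Icc (0:ℝ) 1, C u 1 = u) ∧
  (∀ v ∈ Icc (0:ℝ) 1, C 1 v = v) ∧
  (∀ u₁ u₂ v₁ v₂ : ℝ, 0 ≤ u₁ → u₁ ≤ u₂ → u₂ ≤ 1 → 0 ≤ v₁ → v₁ ≤ v₂ → v₂ ≤ 1 →
    0 ≤ C u₂ v₂ - C u₂ v₁ - C u₁ v₂ + C u₁ v₁)

/-- Spearman's rho: ρ(C) = 12·∫₀¹∫₀¹ C(u,v) du dv − 3. -/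
noncomputable def spearmanRho (C : ℝ → ℝ → ℝ) : ℝ :=
  12 * (∫ u in (0:ℝ)..1, ∫ v in (0:ℝ)..1, C u v) - 3

/-- Spearman's footrule: φ(C) = 6·∫₀¹ C(u,u) du − 2. -/
noncomputable def footrule (C : ℝ → ℝ → ℝ) : ℝ :=
  6 * (∫ u in (0:ℝ)..1, C u u) - 2

/-- Gini's gamma: γ(C) = 4·∫₀¹ C(u,u) du + 4·∫₀¹ C(u,1−u) du − 2. -/
noncomputable def giniGamma (C : ℝ → ℝ → ℝ) : ℝ :=
  4 * (∫ u in (0:ℝ)..1, C u u) + 4 * (∫ u in (0:ℝ)..1, C u (1 - u)) - 2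

/-- Blomqvist's beta: β(C) = 4·C(1/2,1/2) − 1. -/
noncomputable def blomqvistBeta (C : ℝ → ℝ → ℝ) : ℝ :=
  4 * C (1/2) (1/2) - 1

/-- A copula measure of a copula `C`: a probability measure on the plane with
μ([0,u]×[0,v]) = C(u,v) for u,v in the unit interval. -/
def IsCopulaMeasure (C : ℝ → ℝ → ℝ) (μ : Measure (ℝ × ℝ)) : Prop :=
  IsProbabilityMeasure μ ∧
  ∀ u ∈ Icc (0:ℝ) 1, ∀ v ∈ Icc (0:ℝ) 1,
    μ (Icc 0 u ×ˢ Icc 0 v) = ENNReal.ofReal (C u v)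

/-- Kendall's tau expressed via a copula measure μ of C:
τ(C) = 4·∫_{[0,1]²} C dμ − 1. -/
noncomputable def kendallTauInt (C : ℝ → ℝ → ℝ) (μ : Measure (ℝ × ℝ)) : ℝ :=
  4 * (∫ p in Icc (0:ℝ) 1 ×ˢ Icc (0:ℝ) 1, C p.1 p.2 ∂μ) - 1

/-- `B` is the ordinal sum of the copulas `Bk k` with respect to the pairwise disjoint
open subintervals `(a k, b k)` of `[0,1]`. -/
def IsOrdinalSum {n : ℕ} (a b : Fin n → ℝ) (Bk : Fin n → ℝ → ℝ → ℝ)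
    (B : ℝ → ℝ → ℝ) : Prop :=
  (∀ k, 0 ≤ a k ∧ a k ≤ b k ∧ b k ≤ 1) ∧
  (Pairwise fun i j => Disjoint (Ioo (a i) (b i)) (Ioo (a j) (b j))) ∧
  (∀ k, ∀ u ∈ Icc (a k) (b k), ∀ v ∈ Icc (a k) (b k),
    B u v = a k + (b k - a k) * Bk k ((u - a k) / (b k - a k)) ((v - a k) / (b k - a k))) ∧
  (∀ u ∈ Icc (0:ℝ) 1, ∀ v ∈ Icc (0:ℝ) 1,
    (∀ k, ¬(u ∈ Icc (a k) (b k) ∧ v ∈ Icc (a k) (b k))) → B u v = min u v)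

/-!
Put `r = 1 - 2a`. On the unit square the ordinal sum `B` agrees with the continuous function
`singleOrdinalSum a C`, which is the distribution function of
`ν₀ = (Lebesgue measure on the diagonal over [0, a]) + r • (image of μ under p ↦ a + r p)`
`+ (Lebesgue measure on the diagonal over [1 - a, 1])`.
A copula measure is determined by its copula, so `ν = ν₀`, and `∫ B dν` splits into three parts:
`B(t, t) = t` on the diagonal pieces gives `a²/2` and `(1 - (1 - a)²)/2`, while
`B(a + r p) = a + r C(p)` gives `r (a + r ∫ C dμ)`.
-/

local notation "𝕀" => Icc (0:ℝ) 1

namespace IsCopula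

variable {C : ℝ → ℝ → ℝ}

lemma sub_left_mem_Icc (hC : IsCopula C) {u₁ u₂ v : ℝ} (h₀ : 0 ≤ u₁) (h₁₂ : u₁ ≤ u₂)
    (h₂ : u₂ ≤ 1) (hv : v ∈ 𝕀) : C u₂ v - C u₁ v ∈ Icc 0 (u₂ - u₁) := by
  obtain ⟨-, hC_zero, hC_one, -, hrect⟩ := hC
  have lower := hrect u₁ u₂ 0 v h₀ h₁₂ h₂ le_rfl hv.1 hv.2
  have upper := hrect u₁ u₂ v 1 h₀ h₁₂ h₂ hv.1 hv.2 le_rfl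
  rw [hC_zero u₁ ⟨h₀, h₁₂.trans h₂⟩, hC_zero u₂ ⟨h₀.trans h₁₂, h₂⟩] at lower
  rw [hC_one u₁ ⟨h₀, h₁₂.trans h₂⟩, hC_one u₂ ⟨h₀.trans h₁₂, h₂⟩] at upper
  constructor <;> linarith

lemma sub_right_mem_Icc (hC : IsCopula C) {u v₁ v₂ : ℝ} (h₀ : 0 ≤ v₁) (h₁₂ : v₁ ≤ v₂)
    (h₂ : v₂ ≤ 1) (hu : u ∈ 𝕀) : C u v₂ - C u v₁ ∈ Icc 0 (v₂ - v₁) := by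
  obtain ⟨hC_zero, -, -, hC_one, hrect⟩ := hC
  have lower := hrect 0 u v₁ v₂ le_rfl hu.1 hu.2 h₀ h₁₂ h₂
  have upper := hrect u 1 v₁ v₂ hu.1 hu.2 le_rfl h₀ h₁₂ h₂
  rw [hC_zero v₁ ⟨h₀, h₁₂.trans h₂⟩, hC_zero v₂ ⟨h₀.trans h₁₂, h₂⟩] at lower
  rw [hC_one v₁ ⟨h₀, h₁₂.trans h₂⟩, hC_one v₂ ⟨h₀.trans h₁₂, h₂⟩] at upper
  constructor <;> linarith

lemma nonneg (hC : IsCopula C) {u v : ℝ} (hu : u ∈ 𝕀) (hv : v ∈ 𝕀) : 0 ≤ C u v := by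
  simpa [hC.1 v hv] using (hC.sub_left_mem_Icc le_rfl hu.1 hu.2 hv).1

lemma lipschitzOnWith_left (hC : IsCopula C) {v : ℝ} (hv : v ∈ 𝕀) :
    LipschitzOnWith 1 (fun u => C u v) 𝕀 :=
  LipschitzOnWith.of_le_add fun u hu u' hu' => by
    rw [Real.dist_eq]
    rcases le_total u u' with h | h
    · linarith [(hC.sub_left_mem_Icc hu.1 h hu'.2 hv).1, abs_nonneg (u - u')]
    · linarith [(hC.sub_left_mem_Icc hu'.1 h hu.2 hv).2, le_abs_self (u - u')]

lemma lipschitzOnWith_right (hC : IsCopula C) {u : ℝ} (hu : u ∈ 𝕀) :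
    LipschitzOnWith 1 (fun v => C u v) 𝕀 :=
  LipschitzOnWith.of_le_add fun v hv v' hv' => by
    rw [Real.dist_eq]
    rcases le_total v v' with h | h
    · linarith [(hC.sub_right_mem_Icc hv.1 h hv'.2 hu).1, abs_nonneg (v - v')]
    · linarith [(hC.sub_right_mem_Icc hv'.1 h hv.2 hu).2, le_abs_self (v - v')]

lemma continuousOn (hC : IsCopula C) : ContinuousOn (fun p : ℝ × ℝ => C p.1 p.2) (𝕀 ×ˢ 𝕀) :=
  continuousOn_prod_of_continuousOn_lipschitzOnWith _ 1
    (fun _ hu => (hC.lipschitzOnWith_right hu).continuousOn) fun _ hv => hC.lipschitzOnWith_left hv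

end IsCopula

noncomputable def unitClamp (x : ℝ) : ℝ := max 0 (min x 1)

lemma unitClamp_mem (x : ℝ) : unitClamp x ∈ 𝕀 :=
  ⟨le_max_left _ _, max_le zero_le_one (min_le_right _ _)⟩

lemma unitClamp_of_nonpos {x : ℝ} (h : x ≤ 0) : unitClamp x = 0 :=
  max_eq_left (min_le_of_left_le h)

lemma unitClamp_of_one_le {x : ℝ} (h : 1 ≤ x) : unitClamp x = 1 := by
  simp [unitClamp, min_eq_right h]

lemma unitClamp_of_mem {x : ℝ} (h : x ∈ 𝕀) : unitClamp x = x := by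
  simp [unitClamp, min_eq_left h.2, h.1]

@[fun_prop]
lemma continuous_unitClamp : Continuous unitClamp := by
  unfold unitClamp; fun_prop

lemma mul_unitClamp_div {r : ℝ} (hr : 0 ≤ r) (x : ℝ) : r * unitClamp (x / r) = max 0 (min x r) := by
  rcases hr.eq_or_lt with rfl | hr
  · simp
  · rw [unitClamp, mul_max_of_nonneg _ _ hr.le, mul_min_of_nonneg _ _ hr.le,
      mul_div_cancel₀ _ hr.ne', mul_zero, mul_one]

lemma unitClamp_sub_div_of_le {a r x : ℝ} (hr : 0 ≤ r) (hx : x ≤ a) :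
    unitClamp ((x - a) / r) = 0 :=
  unitClamp_of_nonpos (div_nonpos_of_nonpos_of_nonneg (by linarith) hr)

section SingleOrdinalSum

variable {a : ℝ} {C B : ℝ → ℝ → ℝ}

-- At `a = 1/2` the divisions by `1 - 2 * a = 0` are harmless: the term is multiplied by `0`.
noncomputable def singleOrdinalSum (a : ℝ) (C : ℝ → ℝ → ℝ) (u v : ℝ) : ℝ :=
  min a (min u v) + max 0 (min u v - (1 - a)) +
    (1 - 2 * a) * C (unitClamp ((u - a) / (1 - 2 * a))) (unitClamp ((v - a) / (1 - 2 * a)))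

lemma continuous_singleOrdinalSum (hC : IsCopula C) :
    Continuous fun p : ℝ × ℝ => singleOrdinalSum a C p.1 p.2 := by
  have hmid : Continuous fun p : ℝ × ℝ =>
      C (unitClamp ((p.1 - a) / (1 - 2 * a))) (unitClamp ((p.2 - a) / (1 - 2 * a))) :=
    hC.continuousOn.comp_continuous (f := fun p : ℝ × ℝ =>
      (unitClamp ((p.1 - a) / (1 - 2 * a)), unitClamp ((p.2 - a) / (1 - 2 * a))))
      (by fun_prop) fun _ => ⟨unitClamp_mem _, unitClamp_mem _⟩
  exact (by fun_prop : Continuous fun p : ℝ × ℝ =>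
    min a (min p.1 p.2) + max 0 (min p.1 p.2 - (1 - a))).add (continuous_const.mul hmid)

lemma IsCopula.mul_apply_unitClamp_of_le_left (ha : a ≤ 1 / 2) (hC : IsCopula C) {x y : ℝ}
    (hx : 1 - a ≤ x) (hy : y ∈ 𝕀) :
    (1 - 2 * a) * C (unitClamp ((x - a) / (1 - 2 * a))) y = (1 - 2 * a) * y := by
  rcases (show 0 ≤ 1 - 2 * a by linarith).eq_or_lt with hr | hr
  · simp [← hr]
  · rw [unitClamp_of_one_le ((one_le_div hr).2 (by linarith)), hC.2.2.2.1 y hy]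

lemma IsCopula.mul_apply_unitClamp_of_le_right (ha : a ≤ 1 / 2) (hC : IsCopula C) {x y : ℝ}
    (hx : x ∈ 𝕀) (hy : 1 - a ≤ y) :
    (1 - 2 * a) * C x (unitClamp ((y - a) / (1 - 2 * a))) = (1 - 2 * a) * x := by
  rcases (show 0 ≤ 1 - 2 * a by linarith).eq_or_lt with hr | hr
  · simp [← hr]
  · rw [unitClamp_of_one_le ((one_le_div hr).2 (by linarith)), hC.2.2.1 x hx]

lemma singleOrdinalSum_of_mem {u v : ℝ} (hu : u ∈ Icc a (1 - a)) (hv : v ∈ Icc a (1 - a)) :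
    singleOrdinalSum a C u v =
      a + (1 - 2 * a) * C ((u - a) / (1 - 2 * a)) ((v - a) / (1 - 2 * a)) := by
  have hr : 0 ≤ 1 - 2 * a := by linarith [hu.1.trans hu.2]
  have hmin : min a (min u v) = a := min_eq_left (le_min hu.1 hv.1)
  have hmax : max 0 (min u v - (1 - a)) = 0 := max_eq_left (by linarith [min_le_left u v, hu.2])
  rw [singleOrdinalSum, hmin, hmax, add_zero]
  rcases hr.eq_or_lt with hr | hr
  · simp [← hr]
  have hscaled : ∀ x ∈ Icc a (1 - a), (x - a) / (1 - 2 * a) ∈ 𝕀 := fun x hx =>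
    ⟨div_nonneg (by linarith [hx.1]) hr.le, (div_le_one hr).2 (by linarith [hx.2])⟩
  rw [unitClamp_of_mem (hscaled u hu), unitClamp_of_mem (hscaled v hv)]

lemma singleOrdinalSum_of_not_mem (ha : a ≤ 1 / 2) (hC : IsCopula C) {u v : ℝ}
    (h : ¬(u ∈ Icc a (1 - a) ∧ v ∈ Icc a (1 - a))) :
    singleOrdinalSum a C u v = min u v := by
  have hr : 0 ≤ 1 - 2 * a := by linarith
  rw [singleOrdinalSum]
  rcases lt_or_ge u a with hua | hau
  · rw [unitClamp_sub_div_of_le hr hua.le, hC.1 _ (unitClamp_mem _)]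
    simp only [min_def, max_def]; split_ifs <;> linarith
  rcases lt_or_ge v a with hva | hav
  · rw [unitClamp_sub_div_of_le hr hva.le, hC.2.1 _ (unitClamp_mem _)]
    simp only [min_def, max_def]; split_ifs <;> linarith
  have hout : 1 - a < u ∨ 1 - a < v := by
    by_contra! hin
    exact h ⟨⟨hau, hin.1⟩, hav, hin.2⟩
  rcases hout with hu | hv
  · rw [hC.mul_apply_unitClamp_of_le_left ha hu.le (unitClamp_mem _), mul_unitClamp_div hr]
    simp only [min_def, max_def]; split_ifs <;> linarith
  · rw [hC.mul_apply_unitClamp_of_le_right ha (unitClamp_mem _) hv.le, mul_unitClamp_div hr]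
    simp only [min_def, max_def]; split_ifs <;> linarith

lemma singleOrdinalSum_self (ha : a ≤ 1 / 2) (hC : IsCopula C) {t : ℝ}
    (ht : t ∉ Ioo a (1 - a)) : singleOrdinalSum a C t t = t := by
  have hr : 0 ≤ 1 - 2 * a := by linarith
  rw [singleOrdinalSum]
  rcases le_or_gt t a with hta | hta
  · rw [unitClamp_sub_div_of_le hr hta, hC.1 0 ⟨le_rfl, zero_le_one⟩]
    simp only [min_def, max_def]; split_ifs <;> linarith
  · have htop : 1 - a ≤ t := by by_contra! h; exact ht ⟨hta, h⟩
    rw [hC.mul_apply_unitClamp_of_le_left ha htop (unitClamp_mem _), mul_unitClamp_div hr]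
    simp only [min_def, max_def]; split_ifs <;> linarith

lemma IsOrdinalSum.eq_singleOrdinalSum (ha : a ≤ 1 / 2) (hC : IsCopula C)
    (hB : IsOrdinalSum (fun _ : Fin 1 => a) (fun _ => 1 - a) (fun _ => C) B) :
    ∀ u ∈ 𝕀, ∀ v ∈ 𝕀, B u v = singleOrdinalSum a C u v := by
  intro u hu v hv
  by_cases hmid : u ∈ Icc a (1 - a) ∧ v ∈ Icc a (1 - a)
  · rw [hB.2.2.1 0 u hmid.1 v hmid.2, singleOrdinalSum_of_mem hmid.1 hmid.2,
      show 1 - a - a = 1 - 2 * a by ring]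
  · rw [hB.2.2.2 u hu v hv fun _ => hmid, singleOrdinalSum_of_not_mem ha hC hmid]

end SingleOrdinalSum

lemma isCountablySpanning_range_Iic : IsCountablySpanning (range (Iic : ℝ → Set ℝ)) :=
  ⟨fun n : ℕ => Iic (n : ℝ), fun _ => mem_range_self _,
    eq_univ_of_forall fun x => mem_iUnion.2 (exists_nat_ge x)⟩

lemma MeasureTheory.Measure.ext_of_Iic_prod_Iic {μ ν : Measure (ℝ × ℝ)} [IsProbabilityMeasure μ]
    [IsProbabilityMeasure ν] (h : ∀ x y, μ (Iic x ×ˢ Iic y) = ν (Iic x ×ˢ Iic y)) : μ = ν := by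
  have hgen : MeasurableSpace.generateFrom (range Iic) = (inferInstance : MeasurableSpace ℝ) :=
    (borel_eq_generateFrom_Iic ℝ).symm.trans BorelSpace.measurable_eq.symm
  refine ext_of_generate_finite _ (generateFrom_eq_prod hgen hgen isCountablySpanning_range_Iic
    isCountablySpanning_range_Iic).symm (isPiSystem_Iic.prod isPiSystem_Iic) ?_ (by simp)
  rintro _ ⟨_, ⟨x, rfl⟩, _, ⟨y, rfl⟩, rfl⟩
  exact h x y

namespace IsCopulaMeasure

variable {F G : ℝ → ℝ → ℝ} {μ ν : Measure (ℝ × ℝ)}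

lemma congr (hμ : IsCopulaMeasure F μ) (h : ∀ u ∈ 𝕀, ∀ v ∈ 𝕀, F u v = G u v) :
    IsCopulaMeasure G μ :=
  ⟨hμ.1, fun u hu v hv => h u hu v hv ▸ hμ.2 u hu v hv⟩

lemma measure_compl_unitSquare (hμ : IsCopulaMeasure F μ) (h11 : F 1 1 = 1) :
    μ (𝕀 ×ˢ 𝕀)ᶜ = 0 := by
  have := hμ.1
  rw [measure_compl (measurableSet_Icc.prod measurableSet_Icc) (measure_ne_top μ _),
    hμ.2 1 ⟨zero_le_one, le_rfl⟩ 1 ⟨zero_le_one, le_rfl⟩, h11, ENNReal.ofReal_one, measure_univ,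
    tsub_self]

lemma ae_mem_unitSquare (hμ : IsCopulaMeasure F μ) (h11 : F 1 1 = 1) : ∀ᵐ p ∂μ, p ∈ 𝕀 ×ˢ 𝕀 :=
  mem_ae_iff.2 (hμ.measure_compl_unitSquare h11)

lemma measure_inter_prod_inter (hμ : IsCopulaMeasure F μ) (h11 : F 1 1 = 1) (s t : Set ℝ) :
    μ ((s ∩ 𝕀) ×ˢ (t ∩ 𝕀)) = μ (s ×ˢ t) := by
  rw [← prod_inter_prod, measure_inter_conull (hμ.measure_compl_unitSquare h11)]

lemma unique (hμ : IsCopulaMeasure F μ) (hν : IsCopulaMeasure F ν) (h11 : F 1 1 = 1) : μ = ν := by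
  have := hμ.1
  have := hν.1
  refine Measure.ext_of_Iic_prod_Iic fun x y => ?_
  have hIic : ∀ z : ℝ, Iic z ∩ 𝕀 = Icc 0 (min z 1) := fun z => by
    ext; simp only [mem_inter_iff, mem_Iic, mem_Icc, le_min_iff]; tauto
  rw [← hμ.measure_inter_prod_inter h11, ← hν.measure_inter_prod_inter h11, hIic, hIic]
  rcases lt_or_ge x 0 with hx | hx
  · simp [Icc_eq_empty_of_lt (min_lt_of_left_lt hx)]
  rcases lt_or_ge y 0 with hy | hy
  · simp [Icc_eq_empty_of_lt (min_lt_of_left_lt hy)]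
  rw [hμ.2 _ ⟨le_min hx zero_le_one, min_le_right _ _⟩ _ ⟨le_min hy zero_le_one, min_le_right _ _⟩,
    hν.2 _ ⟨le_min hx zero_le_one, min_le_right _ _⟩ _ ⟨le_min hy zero_le_one, min_le_right _ _⟩]

lemma measure_Icc_prod_Icc {C : ℝ → ℝ → ℝ} (hμ : IsCopulaMeasure C μ) (hC : IsCopula C)
    {α β γ δ : ℝ} (hα : α ≤ 0) (hγ : γ ≤ 0) :
    μ (Icc α β ×ˢ Icc γ δ) = ENNReal.ofReal (C (unitClamp β) (unitClamp δ)) := by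
  rw [← hμ.measure_inter_prod_inter (hC.2.2.1 1 ⟨zero_le_one, le_rfl⟩), Icc_inter_Icc,
    Icc_inter_Icc, max_eq_right hα, max_eq_right hγ]
  rcases lt_or_ge β 0 with hβ | hβ
  · simp [Icc_eq_empty_of_lt (min_lt_of_left_lt hβ), unitClamp_of_nonpos hβ.le,
      hC.1 _ (unitClamp_mem _)]
  rcases lt_or_ge δ 0 with hδ | hδ
  · simp [Icc_eq_empty_of_lt (min_lt_of_left_lt hδ), unitClamp_of_nonpos hδ.le,
      hC.2.1 _ (unitClamp_mem _)]
  rw [hμ.2 _ ⟨le_min hβ zero_le_one, min_le_right _ _⟩ _ ⟨le_min hδ zero_le_one, min_le_right _ _⟩,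
    unitClamp, unitClamp, max_eq_right (le_min hβ zero_le_one),
    max_eq_right (le_min hδ zero_le_one)]

end IsCopulaMeasure

noncomputable def diagonalMeasure (c d : ℝ) : Measure (ℝ × ℝ) :=
  (volume.restrict (Icc c d)).map fun t => (t, t)

section DiagonalMeasure

variable {c d : ℝ}

lemma diagonalMeasure_prod {s t : Set ℝ} (hs : MeasurableSet s) (ht : MeasurableSet t) :
    diagonalMeasure c d (s ×ˢ t) = volume (s ∩ t ∩ Icc c d) := by
  rw [diagonalMeasure, Measure.map_apply (by fun_prop) (hs.prod ht)]
  exact Measure.restrict_apply (hs.inter ht)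

lemma diagonalMeasure_univ : diagonalMeasure c d univ = ENNReal.ofReal (d - c) := by
  rw [← univ_prod_univ, diagonalMeasure_prod MeasurableSet.univ MeasurableSet.univ, univ_inter,
    univ_inter, Real.volume_Icc]

lemma diagonalMeasure_Icc_prod_Icc (hc : 0 ≤ c) (u v : ℝ) :
    diagonalMeasure c d (Icc 0 u ×ˢ Icc 0 v) = ENNReal.ofReal (min (min u v) d - c) := by
  rw [diagonalMeasure_prod measurableSet_Icc measurableSet_Icc, Icc_inter_Icc, Icc_inter_Icc,
    Real.volume_Icc, max_self, max_eq_right hc]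

lemma setIntegral_diagonalMeasure {f : ℝ × ℝ → ℝ} (hf : Continuous f) (hc : 0 ≤ c) (hcd : c ≤ d)
    (hd : d ≤ 1) : ∫ p in 𝕀 ×ˢ 𝕀, f p ∂diagonalMeasure c d = ∫ t in c..d, f (t, t) := by
  have hQ : MeasurableSet (𝕀 ×ˢ 𝕀) := measurableSet_Icc.prod measurableSet_Icc
  have hdiag : Measurable fun t : ℝ => (t, t) := by fun_prop
  have hpre : (fun t : ℝ => (t, t)) ⁻¹' (𝕀 ×ˢ 𝕀) ∩ Icc c d = Icc c d := by
    rw [inter_eq_right]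
    exact fun t ht => ⟨⟨hc.trans ht.1, ht.2.trans hd⟩, hc.trans ht.1, ht.2.trans hd⟩
  rw [diagonalMeasure, setIntegral_map hQ hf.aestronglyMeasurable hdiag.aemeasurable,
    Measure.restrict_restrict (hdiag hQ), hpre, intervalIntegral.integral_of_le hcd,
    integral_Icc_eq_integral_Ioc]

end DiagonalMeasure

def middleSquareMap (a : ℝ) (p : ℝ × ℝ) : ℝ × ℝ :=
  (a + (1 - 2 * a) * p.1, a + (1 - 2 * a) * p.2)

lemma measurable_middleSquareMap (a : ℝ) : Measurable (middleSquareMap a) := by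
  unfold middleSquareMap
  fun_prop

noncomputable def singleOrdinalSumMeasure (a : ℝ) (μ : Measure (ℝ × ℝ)) : Measure (ℝ × ℝ) :=
  diagonalMeasure 0 a + ENNReal.ofReal (1 - 2 * a) • μ.map (middleSquareMap a) +
    diagonalMeasure (1 - a) 1

section SingleOrdinalSumMeasure

variable {a : ℝ} {C : ℝ → ℝ → ℝ} {μ : Measure (ℝ × ℝ)}

lemma middleSquareMap_mem (ha : a ≤ 1 / 2) {p : ℝ × ℝ} (hp : p ∈ 𝕀 ×ˢ 𝕀) :
    middleSquareMap a p ∈ Icc a (1 - a) ×ˢ Icc a (1 - a) := by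
  obtain ⟨⟨hx₀, hx₁⟩, hy₀, hy₁⟩ := hp
  simp only [middleSquareMap, mem_prod, mem_Icc]
  refine ⟨⟨?_, ?_⟩, ?_, ?_⟩ <;> nlinarith

lemma singleOrdinalSum_middleSquareMap (ha : a ≤ 1 / 2) {p : ℝ × ℝ} (hp : p ∈ 𝕀 ×ˢ 𝕀) :
    singleOrdinalSum a C (middleSquareMap a p).1 (middleSquareMap a p).2 =
      a + (1 - 2 * a) * C p.1 p.2 := by
  obtain ⟨hp₁, hp₂⟩ := middleSquareMap_mem ha hp
  rw [singleOrdinalSum_of_mem hp₁ hp₂, middleSquareMap]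
  rcases (show 0 ≤ 1 - 2 * a by linarith).eq_or_lt with hr | hr
  · simp [← hr]
  · simp only [add_sub_cancel_left, mul_div_cancel_left₀ _ hr.ne']

lemma ofReal_mul_map_middleSquareMap (ha : a ∈ Icc (0:ℝ) (1/2)) (hC : IsCopula C)
    (hμ : IsCopulaMeasure C μ) (u v : ℝ) :
    ENNReal.ofReal (1 - 2 * a) * μ.map (middleSquareMap a) (Icc 0 u ×ˢ Icc 0 v) =
      ENNReal.ofReal ((1 - 2 * a) *
        C (unitClamp ((u - a) / (1 - 2 * a))) (unitClamp ((v - a) / (1 - 2 * a)))) := by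
  rcases (show 0 ≤ 1 - 2 * a by linarith [ha.2]).eq_or_lt with hr | hr
  · simp [← hr]
  have hpre : middleSquareMap a ⁻¹' (Icc 0 u ×ˢ Icc 0 v) =
      Icc (-a / (1 - 2 * a)) ((u - a) / (1 - 2 * a)) ×ˢ
        Icc (-a / (1 - 2 * a)) ((v - a) / (1 - 2 * a)) := by
    ext p
    simp only [middleSquareMap, mem_preimage, mem_prod, mem_Icc, div_le_iff₀ hr, le_div_iff₀ hr]
    constructor <;> rintro ⟨⟨_, _⟩, _, _⟩ <;> refine ⟨⟨?_, ?_⟩, ?_, ?_⟩ <;> linarith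
  have hlow : -a / (1 - 2 * a) ≤ 0 := div_nonpos_of_nonpos_of_nonneg (by linarith [ha.1]) hr.le
  rw [Measure.map_apply (measurable_middleSquareMap a) (measurableSet_Icc.prod measurableSet_Icc),
    hpre, hμ.measure_Icc_prod_Icc hC hlow hlow, ← ENNReal.ofReal_mul hr.le]

lemma isCopulaMeasure_singleOrdinalSumMeasure (ha : a ∈ Icc (0:ℝ) (1/2)) (hC : IsCopula C)
    (hμ : IsCopulaMeasure C μ) :
    IsCopulaMeasure (singleOrdinalSum a C) (singleOrdinalSumMeasure a μ) := by
  have := hμ.1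
  obtain ⟨ha₀, ha₁⟩ := ha
  refine ⟨⟨?_⟩, fun u hu v hv => ?_⟩
  · rw [singleOrdinalSumMeasure, Measure.add_apply, Measure.add_apply, Measure.smul_apply,
      smul_eq_mul, diagonalMeasure_univ, diagonalMeasure_univ,
      Measure.map_apply (measurable_middleSquareMap a) MeasurableSet.univ, preimage_univ,
      measure_univ, mul_one, ← ENNReal.ofReal_add (by linarith) (by linarith),
      ← ENNReal.ofReal_add (by linarith) (by linarith), ← ENNReal.ofReal_one]
    congr 1
    ring
  · have hlow : ENNReal.ofReal (min (min u v) a - 0) = ENNReal.ofReal (min a (min u v)) := by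
      rw [sub_zero, min_comm]
    have hhigh : ENNReal.ofReal (min (min u v) 1 - (1 - a)) =
        ENNReal.ofReal (max 0 (min u v - (1 - a))) := by
      rw [min_eq_left (min_le_of_left_le hu.2), ENNReal.ofReal_max]
      simp
    have hdiag : 0 ≤ min a (min u v) := le_min ha₀ (le_min hu.1 hv.1)
    have hmid : 0 ≤ (1 - 2 * a) *
        C (unitClamp ((u - a) / (1 - 2 * a))) (unitClamp ((v - a) / (1 - 2 * a))) :=
      mul_nonneg (by linarith) (hC.nonneg (unitClamp_mem _) (unitClamp_mem _))
    rw [singleOrdinalSumMeasure, Measure.add_apply, Measure.add_apply, Measure.smul_apply,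
      smul_eq_mul, diagonalMeasure_Icc_prod_Icc le_rfl, diagonalMeasure_Icc_prod_Icc (by linarith),
      hlow, hhigh, ofReal_mul_map_middleSquareMap ⟨ha₀, ha₁⟩ hC hμ,
      ← ENNReal.ofReal_add hdiag hmid,
      ← ENNReal.ofReal_add (add_nonneg hdiag hmid) (le_max_left _ _), singleOrdinalSum]
    ring_nf

lemma setIntegral_map_middleSquareMap (ha : a ∈ Icc (0:ℝ) (1/2)) (hC : IsCopula C)
    (hμ : IsCopulaMeasure C μ) :
    ∫ p in 𝕀 ×ˢ 𝕀, singleOrdinalSum a C p.1 p.2 ∂μ.map (middleSquareMap a) =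
      a + (1 - 2 * a) * ∫ p in 𝕀 ×ˢ 𝕀, C p.1 p.2 ∂μ := by
  have := hμ.1
  have h11 : C 1 1 = 1 := hC.2.2.1 1 ⟨zero_le_one, le_rfl⟩
  have hQ : MeasurableSet (𝕀 ×ˢ 𝕀) := measurableSet_Icc.prod measurableSet_Icc
  have hT := measurable_middleSquareMap a
  have hsub : 𝕀 ×ˢ 𝕀 ⊆ middleSquareMap a ⁻¹' (𝕀 ×ˢ 𝕀) := fun p hp =>
    have hmid : Icc a (1 - a) ⊆ 𝕀 := Icc_subset_Icc ha.1 (by linarith [ha.1])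
    prod_mono hmid hmid (middleSquareMap_mem ha.2 hp)
  have hCint : IntegrableOn (fun p : ℝ × ℝ => C p.1 p.2) (𝕀 ×ˢ 𝕀) μ :=
    hC.continuousOn.integrableOn_compact (isCompact_Icc.prod isCompact_Icc)
  rw [setIntegral_map hQ (continuous_singleOrdinalSum hC).aestronglyMeasurable hT.aemeasurable,
    setIntegral_eq_of_subset_of_ae_sdiff_eq_zero (hT hQ).nullMeasurableSet hsub
      (by filter_upwards [hμ.ae_mem_unitSquare h11] with p hp h using absurd hp h.2),
    setIntegral_congr_fun hQ fun p hp => singleOrdinalSum_middleSquareMap ha.2 hp,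
    integral_add (integrable_const a) (hCint.const_mul _), integral_const_mul, setIntegral_const,
    measureReal_def, hμ.2 1 ⟨zero_le_one, le_rfl⟩ 1 ⟨zero_le_one, le_rfl⟩, h11, ENNReal.ofReal_one,
    ENNReal.toReal_one, one_smul]

lemma setIntegral_diagonalMeasure_singleOrdinalSum (ha : a ≤ 1 / 2) (hC : IsCopula C)
    {c d : ℝ} (hc : 0 ≤ c) (hcd : c ≤ d) (hd : d ≤ 1) (hout : ∀ t ∈ Icc c d, t ∉ Ioo a (1 - a)) :
    ∫ p in 𝕀 ×ˢ 𝕀, singleOrdinalSum a C p.1 p.2 ∂diagonalMeasure c d = (d ^ 2 - c ^ 2) / 2 := by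
  rw [setIntegral_diagonalMeasure (continuous_singleOrdinalSum hC) hc hcd hd, ← integral_id]
  refine intervalIntegral.integral_congr fun t ht => singleOrdinalSum_self ha hC (hout t ?_)
  rwa [uIcc_of_le hcd] at ht

lemma setIntegral_singleOrdinalSumMeasure (ha : a ∈ Icc (0:ℝ) (1/2)) (hC : IsCopula C)
    (hμ : IsCopulaMeasure C μ) :
    ∫ p in 𝕀 ×ˢ 𝕀, singleOrdinalSum a C p.1 p.2 ∂singleOrdinalSumMeasure a μ =
      a ^ 2 / 2 + (1 - 2 * a) * (a + (1 - 2 * a) * ∫ p in 𝕀 ×ˢ 𝕀, C p.1 p.2 ∂μ) +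
        (1 - (1 - a) ^ 2) / 2 := by
  have := (isCopulaMeasure_singleOrdinalSumMeasure ha hC hμ).1
  have hint : IntegrableOn (fun p : ℝ × ℝ => singleOrdinalSum a C p.1 p.2) (𝕀 ×ˢ 𝕀)
      (singleOrdinalSumMeasure a μ) :=
    (continuous_singleOrdinalSum hC).continuousOn.integrableOn_compact
      (isCompact_Icc.prod isCompact_Icc)
  rw [IntegrableOn, singleOrdinalSumMeasure, Measure.restrict_add, Measure.restrict_add,
    integrable_add_measure, integrable_add_measure] at hint
  obtain ⟨⟨hint₁, hint₂⟩, hint₃⟩ := hint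
  obtain ⟨ha₀, ha₁⟩ := ha
  rw [singleOrdinalSumMeasure, Measure.restrict_add, Measure.restrict_add,
    integral_add_measure (hint₁.add_measure hint₂) hint₃, integral_add_measure hint₁ hint₂,
    Measure.restrict_smul, integral_smul_measure, ENNReal.toReal_ofReal (by linarith), smul_eq_mul,
    setIntegral_map_middleSquareMap ⟨ha₀, ha₁⟩ hC hμ,
    setIntegral_diagonalMeasure_singleOrdinalSum ha₁ hC le_rfl ha₀ (by linarith)
      fun t ht hmid => hmid.1.not_ge ht.2,
    setIntegral_diagonalMeasure_singleOrdinalSum ha₁ hC (by linarith) (by linarith) le_rfl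
      fun t ht hmid => hmid.2.not_ge ht.1]
  ring

end SingleOrdinalSumMeasure

/-- Kendall's tau of the ordinal sum of a single copula C on the interval (a, 1−a):
τ(B) = (1−2a)²·τ(C) + 4a − 4a². -/
theorem kendallTau_ordinalSum_single (aP : ℝ) (ha : aP ∈ Icc (0:ℝ) (1/2))
    (C B : ℝ → ℝ → ℝ) (hC : IsCopula C)
    (hB : IsOrdinalSum (fun _ : Fin 1 => aP) (fun _ => 1 - aP) (fun _ => C) B)
    (ν : Measure (ℝ × ℝ)) (hν : IsCopulaMeasure B ν)
    (μ : Measure (ℝ × ℝ)) (hμ : IsCopulaMeasure C μ) :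
    kendallTauInt B ν = (1 - 2*aP) ^ 2 * kendallTauInt C μ + 4*aP - 4*aP^2 := by
  have hBG := hB.eq_singleOrdinalSum ha.2 hC
  have hG11 : singleOrdinalSum aP C 1 1 = 1 :=
    singleOrdinalSum_self ha.2 hC fun hmid => by linarith [hmid.2, ha.1]
  have hνG : ν = singleOrdinalSumMeasure aP μ :=
    (hν.congr hBG).unique (isCopulaMeasure_singleOrdinalSumMeasure ha hC hμ) hG11
  have hint : ∫ p in 𝕀 ×ˢ 𝕀, B p.1 p.2 ∂ν = ∫ p in 𝕀 ×ˢ 𝕀, singleOrdinalSum aP C p.1 p.2 ∂ν :=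
    setIntegral_congr_fun (measurableSet_Icc.prod measurableSet_Icc) fun p hp => hBG _ hp.1 _ hp.2
  rw [kendallTauInt, kendallTauInt, hint, hνG, setIntegral_singleOrdinalSumMeasure ha hC hμ]
  ring
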